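/- arXiv:2312.02650 — 3 statements merged into one kernel-verified Lean document; each statement's English description precedes it below -/
import Mathlib

section
/- Let A ∈ ℝ^{n×n}, B ∈ ℝ^{n×m}, let Q, Q_f, P ∈ ℝ^{n×n} be symmetric positive semidefinite and R ∈ ℝ^{m×m} symmetric positive semidefinite, suppose P satisfies the Bellman inequality for (A,B,Q,R), and suppose xᵀ Q_f x ≥ xᵀ P x for all x ∈ ℝⁿ. Let S ≥ 1, let w_1,…,w_S > 0 with Σ_s w_s = 1, and let disturbance sequences d^{(s)} = (d_{0,s},…,d_{N−1,s}) satisfy Σ_{s=1}^S w_s d_{k,s} = 0 for every k. Then for every x̂ ∈ ℝⁿ and every family of trajectories (x_{k,s}, u_{k,s}) with x_{0,s} = x̂ and x_{k+1,s} = A x_{k,s} + B u_{k,s} + d_{k,s} for k = 0,…,N−1 and all s, one has x̂ᵀ P x̂ ≤ Σ_{s=1}^S w_s [ Σ_{k=0}^{N−1} ( x_{k,s}ᵀ Q x_{k,s} + u_{k,s}ᵀ R u_{k,s} ) + x_{N,s}ᵀ Q_f x_{N,s} ]. -/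
open Matrix Finset

lemma quad_sym {p : ℕ} {M : Matrix (Fin p) (Fin p) ℝ} (hM : M.PosSemidef)
    (u v : Fin p → ℝ) : u ⬝ᵥ M.mulVec v = v ⬝ᵥ M.mulVec u := by
  have ht : Mᵀ = M := by
    have := hM.1
    simpa [Matrix.IsHermitian, Matrix.conjTranspose_eq_transpose_of_trivial] using this
  rw [dotProduct_mulVec, ← mulVec_transpose, ht, dotProduct_comm]

lemma quad_nonneg {p : ℕ} {M : Matrix (Fin p) (Fin p) ℝ} (hM : M.PosSemidef)
    (v : Fin p → ℝ) : 0 ≤ v ⬝ᵥ M.mulVec v := by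
  simpa using hM.dotProduct_mulVec_nonneg v

lemma quad_convex {p : ℕ} {M : Matrix (Fin p) (Fin p) ℝ} (hM : M.PosSemidef) :
    ConvexOn ℝ Set.univ (fun v : Fin p → ℝ => v ⬝ᵥ M.mulVec v) := by
  refine ⟨convex_univ, ?_⟩
  intro x _ y _ a b ha hb hab
  have h0 : 0 ≤ (x - y) ⬝ᵥ M.mulVec (x - y) := quad_nonneg hM _
  have hsym := quad_sym hM x y
  simp only [sub_eq_add_neg, mulVec_add, mulVec_neg, dotProduct_add, add_dotProduct,
    dotProduct_neg, neg_dotProduct, neg_neg] at h0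
  simp only [mulVec_add, mulVec_smul, dotProduct_add, add_dotProduct, dotProduct_smul,
    smul_dotProduct, smul_eq_mul]
  rw [hsym] at h0 ⊢
  have hb' : b = 1 - a := by linarith
  subst hb'
  nlinarith [mul_nonneg (mul_nonneg ha hb) h0]

lemma fin_telescope {N : ℕ} (f : Fin (N + 1) → ℝ) :
    ∑ k : Fin N, (f k.castSucc - f k.succ) = f 0 - f (Fin.last N) := by
  induction N with
  | zero => simp
  | succ n ih =>
    rw [Fin.sum_univ_castSucc]
    have := ih (fun k => f k.castSucc)
    simp only [Fin.succ_castSucc] at this ⊢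
    rw [this]
    have e1 : (Fin.castSucc 0 : Fin (n+1+1)) = 0 := rfl
    have e2 : (Fin.last n).succ = Fin.last (n+1) := Fin.succ_last n
    rw [e1, e2]; ring

lemma sum_smul_mulVec {p q S : ℕ} (M : Matrix (Fin p) (Fin q) ℝ) (w : Fin S → ℝ)
    (v : Fin S → Fin q → ℝ) :
    ∑ s, w s • M.mulVec (v s) = M.mulVec (∑ s, w s • v s) := by
  rw [show M.mulVec (∑ s, w s • v s) = M.mulVecLin (∑ s, w s • v s) from rfl,
    map_sum]
  simp [Matrix.mulVecLin_apply, Matrix.mulVec_smul]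


/-- The multistage LQR quadratic `x ↦ xᵀ P x` (with `P` satisfying the Bellman
inequality and dominated by the terminal cost `Q_f`) under-estimates the weighted scenario cost
of any scenario ensemble with zero-weighted-mean disturbances. -/
theorem lqr_quadratic_underestimates_scenario_cost
    {n m N S : ℕ} (hS : 1 ≤ S)
    (A : Matrix (Fin n) (Fin n) ℝ) (B : Matrix (Fin n) (Fin m) ℝ)
    (Q Qf P : Matrix (Fin n) (Fin n) ℝ) (R : Matrix (Fin m) (Fin m) ℝ)
    (hQ : Q.PosSemidef) (hQf : Qf.PosSemidef) (hP : P.PosSemidef) (hR : R.PosSemidef)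
    (hBellman : ∀ (x : Fin n → ℝ) (u : Fin m → ℝ),
      x ⬝ᵥ P.mulVec x ≤ x ⬝ᵥ Q.mulVec x + u ⬝ᵥ R.mulVec u +
        (A.mulVec x + B.mulVec u) ⬝ᵥ P.mulVec (A.mulVec x + B.mulVec u))
    (hQfP : ∀ x : Fin n → ℝ, x ⬝ᵥ P.mulVec x ≤ x ⬝ᵥ Qf.mulVec x)
    (w : Fin S → ℝ) (hw : ∀ s, 0 < w s) (hw1 : ∑ s, w s = 1)
    (d : Fin N → Fin S → Fin n → ℝ)
    (hd : ∀ k, ∑ s, w s • d k s = 0)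
    (xhat : Fin n → ℝ)
    (x : Fin (N + 1) → Fin S → Fin n → ℝ) (u : Fin N → Fin S → Fin m → ℝ)
    (hx0 : ∀ s, x 0 s = xhat)
    (hdyn : ∀ (k : Fin N) (s : Fin S),
      x k.succ s = A.mulVec (x k.castSucc s) + B.mulVec (u k s) + d k s) :
    xhat ⬝ᵥ P.mulVec xhat ≤ ∑ s, w s *
      ((∑ k : Fin N, (x k.castSucc s ⬝ᵥ Q.mulVec (x k.castSucc s) +
          u k s ⬝ᵥ R.mulVec (u k s))) +
        x (Fin.last N) s ⬝ᵥ Qf.mulVec (x (Fin.last N) s)) := by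
  -- mean trajectory
  set xb : Fin (N + 1) → Fin n → ℝ := fun k => ∑ s, w s • x k s with hxb
  set ub : Fin N → Fin m → ℝ := fun k => ∑ s, w s • u k s with hub
  have hw0 : ∀ s : Fin S, s ∈ Finset.univ → 0 ≤ w s := fun s _ => (hw s).le
  have hxb0 : xb 0 = xhat := by
    simp only [hxb]
    have : ∀ s : Fin S, w s • x 0 s = w s • xhat := fun s => by rw [hx0]
    rw [Finset.sum_congr rfl (fun s _ => this s), ← Finset.sum_smul, hw1, one_smul]
  have hdynb : ∀ k : Fin N, xb k.succ = A.mulVec (xb k.castSucc) + B.mulVec (ub k) := by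
    intro k
    simp only [hxb, hub]
    calc ∑ s, w s • x k.succ s
        = ∑ s, (w s • A.mulVec (x k.castSucc s) + w s • B.mulVec (u k s) + w s • d k s) := by
          refine Finset.sum_congr rfl fun s _ => ?_
          rw [hdyn k s]; rw [smul_add, smul_add]
      _ = (∑ s, w s • A.mulVec (x k.castSucc s)) + (∑ s, w s • B.mulVec (u k s))
            + ∑ s, w s • d k s := by rw [Finset.sum_add_distrib, Finset.sum_add_distrib]
      _ = A.mulVec (∑ s, w s • x k.castSucc s) + B.mulVec (∑ s, w s • u k s) := by
          rw [hd k, add_zero, sum_smul_mulVec, sum_smul_mulVec]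
  -- telescoping with Bellman
  have hstep : ∀ k : Fin N,
      xb k.castSucc ⬝ᵥ P.mulVec (xb k.castSucc) - xb k.succ ⬝ᵥ P.mulVec (xb k.succ)
        ≤ xb k.castSucc ⬝ᵥ Q.mulVec (xb k.castSucc) + ub k ⬝ᵥ R.mulVec (ub k) := by
    intro k
    have := hBellman (xb k.castSucc) (ub k)
    rw [← hdynb k] at this
    linarith
  have htel := fin_telescope (fun k => xb k ⬝ᵥ P.mulVec (xb k))
  have hsum : xb 0 ⬝ᵥ P.mulVec (xb 0) - xb (Fin.last N) ⬝ᵥ P.mulVec (xb (Fin.last N))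
      ≤ ∑ k : Fin N, (xb k.castSucc ⬝ᵥ Q.mulVec (xb k.castSucc) + ub k ⬝ᵥ R.mulVec (ub k)) := by
    rw [← htel]
    exact Finset.sum_le_sum fun k _ => hstep k
  have hmean : xhat ⬝ᵥ P.mulVec xhat ≤
      (∑ k : Fin N, (xb k.castSucc ⬝ᵥ Q.mulVec (xb k.castSucc) + ub k ⬝ᵥ R.mulVec (ub k)))
        + xb (Fin.last N) ⬝ᵥ Qf.mulVec (xb (Fin.last N)) := by
    have h2 := hQfP (xb (Fin.last N))
    rw [← hxb0]
    linarith
  -- Jensen bounds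
  have jenQ : ∀ k : Fin N, xb k.castSucc ⬝ᵥ Q.mulVec (xb k.castSucc)
      ≤ ∑ s, w s * (x k.castSucc s ⬝ᵥ Q.mulVec (x k.castSucc s)) := by
    intro k
    have := (quad_convex hQ).map_sum_le hw0 hw1 (fun s _ => Set.mem_univ (x k.castSucc s))
    simpa [smul_eq_mul] using this
  have jenR : ∀ k : Fin N, ub k ⬝ᵥ R.mulVec (ub k)
      ≤ ∑ s, w s * (u k s ⬝ᵥ R.mulVec (u k s)) := by
    intro k
    have := (quad_convex hR).map_sum_le hw0 hw1 (fun s _ => Set.mem_univ (u k s))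
    simpa [smul_eq_mul] using this
  have jenQf : xb (Fin.last N) ⬝ᵥ Qf.mulVec (xb (Fin.last N))
      ≤ ∑ s, w s * (x (Fin.last N) s ⬝ᵥ Qf.mulVec (x (Fin.last N) s)) := by
    have := (quad_convex hQf).map_sum_le hw0 hw1 (fun s _ => Set.mem_univ (x (Fin.last N) s))
    simpa [smul_eq_mul] using this
  -- reorganize RHS
  have hRHS : ∑ s, w s *
      ((∑ k : Fin N, (x k.castSucc s ⬝ᵥ Q.mulVec (x k.castSucc s) +
          u k s ⬝ᵥ R.mulVec (u k s))) +
        x (Fin.last N) s ⬝ᵥ Qf.mulVec (x (Fin.last N) s))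
      = (∑ k : Fin N, ((∑ s, w s * (x k.castSucc s ⬝ᵥ Q.mulVec (x k.castSucc s)))
          + ∑ s, w s * (u k s ⬝ᵥ R.mulVec (u k s))))
        + ∑ s, w s * (x (Fin.last N) s ⬝ᵥ Qf.mulVec (x (Fin.last N) s)) := by
    simp only [mul_add, Finset.mul_sum]
    rw [Finset.sum_add_distrib, Finset.sum_comm]
    congr 1
    exact Finset.sum_congr rfl fun k _ => Finset.sum_add_distrib
  rw [hRHS]
  have hsum2 : ∑ k : Fin N, (xb k.castSucc ⬝ᵥ Q.mulVec (xb k.castSucc) + ub k ⬝ᵥ R.mulVec (ub k))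
      ≤ ∑ k : Fin N, ((∑ s, w s * (x k.castSucc s ⬝ᵥ Q.mulVec (x k.castSucc s)))
          + ∑ s, w s * (u k s ⬝ᵥ R.mulVec (u k s))) :=
    Finset.sum_le_sum fun k _ => add_le_add (jenQ k) (jenR k)
  linarith
end

section
/- Let A ∈ ℝ^{n×n}, B ∈ ℝ^{n×m}, let U_0,…,U_{N−1} ⊆ ℝᵐ and X_1,…,X_N ⊆ ℝⁿ be convex sets, let l_0,…,l_{N−1} : ℝⁿ × ℝᵐ → ℝ be convex and nonnegative, and let V_t : ℝⁿ → ℝ be convex and nonnegative. Let w_1,…,w_S > 0 with Σ_s w_s = 1 and let disturbance sequences d^{(1)},…,d^{(S)} satisfy Σ_{s=1}^S w_s d^{(s)} = 0 (componentwise, for every stage k). If the feasible set F(x̂, d^{(s)}) is nonempty for every s, then the nominal feasible set F(x̂, 0) is nonempty and V_N(x̂, 0) ≤ Σ_{s=1}^S w_s V_N(x̂, d^{(s)}). -/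
open Matrix Finset

/-- The feasible set `F(xhat, d)` of the convex finite-horizon problem: trajectories with
`x₀ = xhat`, dynamics `x_{k+1} = A x_k + B u_k + d_k`, input constraints `u_k ∈ U_k` and state
constraints `x_{k+1} ∈ X_{k+1}`. -/
def mpcFeas {n m N : ℕ}
    (A : Matrix (Fin n) (Fin n) ℝ) (B : Matrix (Fin n) (Fin m) ℝ)
    (U : Fin N → Set (Fin m → ℝ)) (X : Fin N → Set (Fin n → ℝ))
    (xhat : Fin n → ℝ) (d : Fin N → Fin n → ℝ) :
    Set ((Fin (N + 1) → Fin n → ℝ) × (Fin N → Fin m → ℝ)) :=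
  {p | p.1 0 = xhat ∧
    (∀ k : Fin N, p.1 k.succ = A.mulVec (p.1 k.castSucc) + B.mulVec (p.2 k) + d k) ∧
    (∀ k : Fin N, p.2 k ∈ U k) ∧
    (∀ k : Fin N, p.1 k.succ ∈ X k)}

/-- Trajectory cost: sum of stage costs plus terminal cost. -/
def mpcCost {n m N : ℕ}
    (l : Fin N → (Fin n → ℝ) → (Fin m → ℝ) → ℝ) (Vt : (Fin n → ℝ) → ℝ)
    (p : (Fin (N + 1) → Fin n → ℝ) × (Fin N → Fin m → ℝ)) : ℝ :=
  (∑ k : Fin N, l k (p.1 k.castSucc) (p.2 k)) + Vt (p.1 (Fin.last N))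

/-- Value function `V_N(xhat, d)`. -/
noncomputable def mpcVal {n m N : ℕ}
    (A : Matrix (Fin n) (Fin n) ℝ) (B : Matrix (Fin n) (Fin m) ℝ)
    (U : Fin N → Set (Fin m → ℝ)) (X : Fin N → Set (Fin n → ℝ))
    (l : Fin N → (Fin n → ℝ) → (Fin m → ℝ) → ℝ) (Vt : (Fin n → ℝ) → ℝ)
    (xhat : Fin n → ℝ) (d : Fin N → Fin n → ℝ) : ℝ :=
  sInf (mpcCost l Vt '' mpcFeas A B U X xhat d)

/-!
The set of pairs (disturbance, feasible trajectory) is convex and the cost is convex. Averaging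
near-optimal scenario trajectories with the weights `w` therefore gives a trajectory that is
feasible for the mean disturbance `0` and, by Jensen, costs at most the weighted mean of the
scenario costs. Nonnegativity of the cost makes the nominal `sInf` a genuine infimum rather than
the junk value of an unbounded set.
-/

theorem sInf_image_le_sum_mul_sInf_image {α ι : Type*} [Fintype ι] {f : α → ℝ} {T : Set α}
    {S : ι → Set α} {w : ι → ℝ} (hT : BddBelow (f '' T)) (hS : ∀ i, (S i).Nonempty)
    (hw0 : ∀ i, 0 ≤ w i) (hw1 : ∑ i, w i = 1)
    (h : ∀ p : ι → α, (∀ i, p i ∈ S i) → ∃ q ∈ T, f q ≤ ∑ i, w i * f (p i)) :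
    sInf (f '' T) ≤ ∑ i, w i * sInf (f '' S i) := by
  refine le_of_forall_pos_le_add fun ε hε => ?_
  have hnear : ∀ i, ∃ p ∈ S i, f p < sInf (f '' S i) + ε := fun i => by
    obtain ⟨_, ⟨p, hp, rfl⟩, hlt⟩ := Real.lt_sInf_add_pos ((hS i).image f) hε
    exact ⟨p, hp, hlt⟩
  choose p hpS hplt using hnear
  obtain ⟨q, hqT, hq⟩ := h p hpS
  calc sInf (f '' T) ≤ f q := csInf_le hT (Set.mem_image_of_mem f hqT)
    _ ≤ ∑ i, w i * f (p i) := hq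
    _ ≤ ∑ i, w i * (sInf (f '' S i) + ε) :=
      sum_le_sum fun i _ => mul_le_mul_of_nonneg_left (hplt i).le (hw0 i)
    _ = ∑ i, w i * sInf (f '' S i) + ε := by
      simp only [mul_add, sum_add_distrib, ← sum_mul, hw1, one_mul]

section MPC

variable {n m N : ℕ}

theorem convex_mpcFeas_graph
    (A : Matrix (Fin n) (Fin n) ℝ) (B : Matrix (Fin n) (Fin m) ℝ)
    {U : Fin N → Set (Fin m → ℝ)} {X : Fin N → Set (Fin n → ℝ)}
    (hU : ∀ k, Convex ℝ (U k)) (hX : ∀ k, Convex ℝ (X k)) (xhat : Fin n → ℝ) :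
    Convex ℝ {q : (Fin N → Fin n → ℝ) × ((Fin (N + 1) → Fin n → ℝ) × (Fin N → Fin m → ℝ)) |
      q.2 ∈ mpcFeas A B U X xhat q.1} := by
  rintro ⟨d, p⟩ hpd ⟨d', q⟩ hqd a b ha hb hab
  obtain ⟨hp₀, hp, hpU, hpX⟩ : p ∈ mpcFeas A B U X xhat d := hpd
  obtain ⟨hq₀, hq, hqU, hqX⟩ : q ∈ mpcFeas A B U X xhat d' := hqd
  refine ⟨?_, fun k => ?_, fun k => hU k (hpU k) (hqU k) ha hb hab,
    fun k => hX k (hpX k) (hqX k) ha hb hab⟩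
  · simp [hp₀, hq₀, ← add_smul, hab]
  · simp only [Prod.smul_mk, Prod.mk_add_mk, Prod.fst_add, Prod.snd_add, Prod.smul_fst,
      Prod.smul_snd, Pi.add_apply, Pi.smul_apply, hp, hq, smul_add, mulVec_add, mulVec_smul]
    abel

theorem sum_smul_mem_mpcFeas {ι : Type*}
    (A : Matrix (Fin n) (Fin n) ℝ) (B : Matrix (Fin n) (Fin m) ℝ)
    {U : Fin N → Set (Fin m → ℝ)} {X : Fin N → Set (Fin n → ℝ)}
    (hU : ∀ k, Convex ℝ (U k)) (hX : ∀ k, Convex ℝ (X k)) (xhat : Fin n → ℝ)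
    {t : Finset ι} {w : ι → ℝ} (hw0 : ∀ i ∈ t, 0 ≤ w i) (hw1 : ∑ i ∈ t, w i = 1)
    {d : ι → Fin N → Fin n → ℝ} {p : ι → (Fin (N + 1) → Fin n → ℝ) × (Fin N → Fin m → ℝ)}
    (hp : ∀ i ∈ t, p i ∈ mpcFeas A B U X xhat (d i)) :
    ∑ i ∈ t, w i • p i ∈ mpcFeas A B U X xhat (∑ i ∈ t, w i • d i) := by
  have := (convex_mpcFeas_graph A B hU hX xhat).sum_mem hw0 hw1 (z := fun i => (d i, p i)) hp
  simpa [Prod.fst_sum, Prod.snd_sum] using this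

theorem convexOn_mpcCost {l : Fin N → (Fin n → ℝ) → (Fin m → ℝ) → ℝ} {Vt : (Fin n → ℝ) → ℝ}
    (hl : ∀ k, ConvexOn ℝ Set.univ (fun p : (Fin n → ℝ) × (Fin m → ℝ) => l k p.1 p.2))
    (hVt : ConvexOn ℝ Set.univ Vt) :
    ConvexOn ℝ Set.univ (mpcCost l Vt) := by
  refine ⟨convex_univ, fun p _ q _ a b ha hb hab => ?_⟩
  have hstage : ∀ k, l k ((a • p + b • q).1 k.castSucc) ((a • p + b • q).2 k) ≤
      a * l k (p.1 k.castSucc) (p.2 k) + b * l k (q.1 k.castSucc) (q.2 k) := fun k =>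
    (hl k).2 (Set.mem_univ (p.1 k.castSucc, p.2 k)) (Set.mem_univ (q.1 k.castSucc, q.2 k))
      ha hb hab
  have hterminal := hVt.2 (Set.mem_univ (p.1 (Fin.last N))) (Set.mem_univ (q.1 (Fin.last N)))
    ha hb hab
  calc mpcCost l Vt (a • p + b • q)
      ≤ ∑ k, (a * l k (p.1 k.castSucc) (p.2 k) + b * l k (q.1 k.castSucc) (q.2 k)) +
          (a * Vt (p.1 (Fin.last N)) + b * Vt (q.1 (Fin.last N))) :=
        add_le_add (sum_le_sum fun k _ => hstage k) hterminal
    _ = a • mpcCost l Vt p + b • mpcCost l Vt q := by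
        simp only [mpcCost, sum_add_distrib, ← Finset.mul_sum, smul_eq_mul]
        ring

theorem mpcCost_nonneg {l : Fin N → (Fin n → ℝ) → (Fin m → ℝ) → ℝ} {Vt : (Fin n → ℝ) → ℝ}
    (hl0 : ∀ k x u, 0 ≤ l k x u) (hVt0 : ∀ x, 0 ≤ Vt x)
    (p : (Fin (N + 1) → Fin n → ℝ) × (Fin N → Fin m → ℝ)) : 0 ≤ mpcCost l Vt p :=
  add_nonneg (sum_nonneg fun k _ => hl0 k _ _) (hVt0 _)

end MPC

/-- Jensen step of the paper's Theorem 1: if every scenario `F(xhat, d⁽ˢ⁾)` is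
feasible and the disturbances have zero weighted mean, then the nominal problem is feasible and
the nominal value under-estimates the weighted scenario values. -/
theorem nominal_value_underestimates_weighted_scenario_values
    {n m N S : ℕ}
    (A : Matrix (Fin n) (Fin n) ℝ) (B : Matrix (Fin n) (Fin m) ℝ)
    (U : Fin N → Set (Fin m → ℝ)) (X : Fin N → Set (Fin n → ℝ))
    (hU : ∀ k, Convex ℝ (U k)) (hX : ∀ k, Convex ℝ (X k))
    (l : Fin N → (Fin n → ℝ) → (Fin m → ℝ) → ℝ)
    (hl : ∀ k, ConvexOn ℝ Set.univ (fun p : (Fin n → ℝ) × (Fin m → ℝ) => l k p.1 p.2))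
    (hl0 : ∀ k x u, 0 ≤ l k x u)
    (Vt : (Fin n → ℝ) → ℝ)
    (hVt : ConvexOn ℝ Set.univ Vt) (hVt0 : ∀ x, 0 ≤ Vt x)
    (w : Fin S → ℝ) (hw : ∀ s, 0 < w s) (hw1 : ∑ s, w s = 1)
    (d : Fin S → Fin N → Fin n → ℝ)
    (hd : ∀ k : Fin N, ∑ s, w s • d s k = 0)
    (xhat : Fin n → ℝ)
    (hfeas : ∀ s : Fin S, (mpcFeas A B U X xhat (d s)).Nonempty) :
    (mpcFeas A B U X xhat 0).Nonempty ∧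
      mpcVal A B U X l Vt xhat 0 ≤ ∑ s, w s * mpcVal A B U X l Vt xhat (d s) := by
  have hd0 : ∑ s, w s • d s = 0 := by
    ext k : 1
    simpa [Finset.sum_apply] using hd k
  have hcomb : ∀ p : Fin S → (Fin (N + 1) → Fin n → ℝ) × (Fin N → Fin m → ℝ),
      (∀ s, p s ∈ mpcFeas A B U X xhat (d s)) → ∑ s, w s • p s ∈ mpcFeas A B U X xhat 0 :=
    fun p hp => hd0 ▸ sum_smul_mem_mpcFeas A B hU hX xhat (fun s _ => (hw s).le) hw1
      (fun s _ => hp s)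
  choose p₀ hp₀ using hfeas
  refine ⟨⟨_, hcomb p₀ hp₀⟩, sInf_image_le_sum_mul_sInf_image ?_ (fun s => ⟨p₀ s, hp₀ s⟩)
    (fun s => (hw s).le) hw1 fun p hp => ⟨_, hcomb p hp, ?_⟩⟩
  · exact ⟨0, Set.forall_mem_image.2 fun p _ => mpcCost_nonneg hl0 hVt0 p⟩
  · exact (convexOn_mpcCost hl hVt).map_sum_le (fun s _ => (hw s).le) hw1
      (fun _ _ => Set.mem_univ _)
end

section
/- Let A ∈ ℝ^{n×n}, B ∈ ℝ^{n×m}, Q, Q_f ∈ ℝ^{n×n}, R ∈ ℝ^{m×m}, let w_1,…,w_S be real weights with Σ_s w_s = 1, and let disturbances d_{k,s} ∈ ℝⁿ satisfy Σ_{s=1}^S w_s d_{k,s} = 0 for every k = 0,…,N−1. Define the deviation sequences e_{0,s} = 0 and e_{k+1,s} = A e_{k,s} + d_{k,s}, and set C = Σ_{s=1}^S w_s [ Σ_{k=0}^{N−1} e_{k,s}ᵀ Q e_{k,s} + e_{N,s}ᵀ Q_f e_{N,s} ]. Then for every initial state x̂ ∈ ℝⁿ and every (shared, open-loop) control sequence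 u_0,…,u_{N−1} ∈ ℝᵐ, letting x_{k,s} denote the scenario trajectories (x_{0,s} = x̂, x_{k+1,s} = A x_{k,s} + B u_k + d_{k,s}) and x̄_k the nominal trajectory (x̄_0 = x̂, x̄_{k+1} = A x̄_k + B u_k), one has Σ_{s=1}^S w_s [ Σ_{k=0}^{N−1} ( x_{k,s}ᵀ Q x_{k,s} + u_kᵀ R u_k ) + x_{N,s}ᵀ Q_f x_{N,s} ] = Σ_{k=0}^{N−1} ( x̄_kᵀ Q x̄_k + u_kᵀ R u_k ) + x̄_Nᵀ Q_f x̄_N + C; in particular C does not depend on x̂ or on the control sequence. -/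
open Matrix Finset

/-! Writing each scenario trajectory as `x_{k,s} = x̄_k + e_{k,s}`, the deviations `e_{k,s}` obey a
linear recursion driven by the disturbances, so their weighted mean vanishes at every stage.
Expanding each quadratic form, the cross terms `x̄_kᵀ Q e_{k,s} + e_{k,s}ᵀ Q x̄_k` therefore drop
out of the weighted sum, and what remains is the nominal cost plus the weighted deviation cost. -/

section Deviation

variable {R ι : Type*} [CommRing R] [Fintype ι] {N : ℕ} (A : Matrix ι ι R)

theorem trajectory_eq_nominal_add_deviation (b d : Fin N → ι → R)
    (x xbar e : Fin (N + 1) → ι → R) (hx0 : x 0 = xbar 0) (he0 : e 0 = 0)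
    (hx : ∀ k, x k.succ = A *ᵥ x k.castSucc + b k + d k)
    (hxbar : ∀ k, xbar k.succ = A *ᵥ xbar k.castSucc + b k)
    (he : ∀ k, e k.succ = A *ᵥ e k.castSucc + d k) (k : Fin (N + 1)) :
    x k = xbar k + e k := by
  induction k using Fin.induction with
  | zero => rw [hx0, he0, add_zero]
  | succ k ih =>
    rw [hx, hxbar, he, ih, mulVec_add]
    abel

theorem sum_smul_deviation_eq_zero {σ : Type*} [Fintype σ] (w : σ → R)
    (d : Fin N → σ → ι → R) (hd : ∀ k, ∑ s, w s • d k s = 0)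
    (e : Fin (N + 1) → σ → ι → R) (he0 : ∀ s, e 0 s = 0)
    (he : ∀ k s, e k.succ s = A *ᵥ e k.castSucc s + d k s) (k : Fin (N + 1)) :
    ∑ s, w s • e k s = 0 := by
  induction k using Fin.induction with
  | zero => simp [he0]
  | succ k ih =>
    calc ∑ s, w s • e k.succ s
        = A *ᵥ (∑ s, w s • e k.castSucc s) + ∑ s, w s • d k s := by
          simp only [he, smul_add, sum_add_distrib, mulVec_sum, mulVec_smul]
      _ = 0 := by rw [ih, hd, mulVec_zero, add_zero]

end Deviation

theorem sum_mul_quadForm_add_of_sum_smul_eq_zero {R ι σ : Type*} [CommRing R] [Fintype ι]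
    [Fintype σ] (M : Matrix ι ι R) (w : σ → R) (hw : ∑ s, w s = 1) (a : ι → R)
    (v : σ → ι → R) (hv : ∑ s, w s • v s = 0) :
    ∑ s, w s * ((a + v s) ⬝ᵥ M *ᵥ (a + v s)) =
      a ⬝ᵥ M *ᵥ a + ∑ s, w s * (v s ⬝ᵥ M *ᵥ v s) := by
  have hleft : ∑ s, w s * (a ⬝ᵥ M *ᵥ v s) = 0 := by
    simpa [mulVec_sum, dotProduct_sum, mulVec_smul, dotProduct_smul] using
      congrArg (a ⬝ᵥ M *ᵥ ·) hv
  have hright : ∑ s, w s * (v s ⬝ᵥ M *ᵥ a) = 0 := by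
    simpa [sum_dotProduct, smul_dotProduct] using congrArg (· ⬝ᵥ M *ᵥ a) hv
  have hexpand : ∀ s, w s * ((a + v s) ⬝ᵥ M *ᵥ (a + v s)) =
      w s * (a ⬝ᵥ M *ᵥ a) + w s * (a ⬝ᵥ M *ᵥ v s) + w s * (v s ⬝ᵥ M *ᵥ a) +
        w s * (v s ⬝ᵥ M *ᵥ v s) := fun s => by
    simp only [mulVec_add, dotProduct_add, add_dotProduct]
    ring
  simp only [hexpand, sum_add_distrib, hleft, hright, ← sum_mul, hw]
  ring

/-- N-step decomposition in the proof of the paper's Theorem 2: for a shared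
open-loop control sequence, the weighted scenario quadratic cost equals the nominal quadratic
cost plus the constant `C` built from the deviation sequences `e_{k,s}`, independently of the
initial state and the controls. -/
theorem multistage_cost_eq_nominal_cost_add_const
    {n m N S : ℕ}
    (A : Matrix (Fin n) (Fin n) ℝ) (B : Matrix (Fin n) (Fin m) ℝ)
    (Q Qf : Matrix (Fin n) (Fin n) ℝ) (R : Matrix (Fin m) (Fin m) ℝ)
    (w : Fin S → ℝ) (hw1 : ∑ s, w s = 1)
    (d : Fin N → Fin S → Fin n → ℝ)
    (hd : ∀ k : Fin N, ∑ s, w s • d k s = 0)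
    (e : Fin (N + 1) → Fin S → Fin n → ℝ)
    (he0 : ∀ s, e 0 s = 0)
    (herec : ∀ (k : Fin N) (s : Fin S), e k.succ s = A.mulVec (e k.castSucc s) + d k s)
    (C : ℝ)
    (hC : C = ∑ s, w s *
      ((∑ k : Fin N, e k.castSucc s ⬝ᵥ Q.mulVec (e k.castSucc s)) +
        e (Fin.last N) s ⬝ᵥ Qf.mulVec (e (Fin.last N) s)))
    (xhat : Fin n → ℝ) (u : Fin N → Fin m → ℝ)
    (x : Fin (N + 1) → Fin S → Fin n → ℝ)
    (hx0 : ∀ s, x 0 s = xhat)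
    (hxdyn : ∀ (k : Fin N) (s : Fin S),
      x k.succ s = A.mulVec (x k.castSucc s) + B.mulVec (u k) + d k s)
    (xbar : Fin (N + 1) → Fin n → ℝ)
    (hxbar0 : xbar 0 = xhat)
    (hxbardyn : ∀ k : Fin N, xbar k.succ = A.mulVec (xbar k.castSucc) + B.mulVec (u k)) :
    ∑ s, w s *
        ((∑ k : Fin N, (x k.castSucc s ⬝ᵥ Q.mulVec (x k.castSucc s) +
            u k ⬝ᵥ R.mulVec (u k))) +
          x (Fin.last N) s ⬝ᵥ Qf.mulVec (x (Fin.last N) s)) =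
      (∑ k : Fin N, (xbar k.castSucc ⬝ᵥ Q.mulVec (xbar k.castSucc) +
          u k ⬝ᵥ R.mulVec (u k))) +
        xbar (Fin.last N) ⬝ᵥ Qf.mulVec (xbar (Fin.last N)) + C := by
  have hxe : ∀ k s, x k s = xbar k + e k s := fun k s =>
    trajectory_eq_nominal_add_deviation A (fun k => B *ᵥ u k) (fun k => d k s) (fun k => x k s)
      xbar (fun k => e k s) ((hx0 s).trans hxbar0.symm) (he0 s) (fun k => hxdyn k s) hxbardyn
      (fun k => herec k s) k
  have hquad : ∀ (M : Matrix (Fin n) (Fin n) ℝ) k, ∑ s, w s * (x k s ⬝ᵥ M *ᵥ x k s) =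
      xbar k ⬝ᵥ M *ᵥ xbar k + ∑ s, w s * (e k s ⬝ᵥ M *ᵥ e k s) := fun M k => by
    simp only [hxe]
    exact sum_mul_quadForm_add_of_sum_smul_eq_zero M w hw1 _ _
      (sum_smul_deviation_eq_zero A w d hd e he0 herec k)
  calc
    _ = ∑ k : Fin N, (∑ s, w s * (x k.castSucc s ⬝ᵥ Q *ᵥ x k.castSucc s) + u k ⬝ᵥ R *ᵥ u k) +
          ∑ s, w s * (x (Fin.last N) s ⬝ᵥ Qf *ᵥ x (Fin.last N) s) := by
      simp only [sum_add_distrib, mul_add, ← sum_mul, hw1, one_mul]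
      simp only [mul_sum]
      rw [sum_comm]
    _ = _ := by
      simp only [hquad, hC, mul_add, mul_sum, sum_add_distrib]
      rw [sum_comm]
      ring
end
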